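/- Let (Ω,Σ,P) be a probability space and let (R_k)_{k≥1} be a sequence of P-integrable random variables with sup_k E_P[|R_k|] < ∞, such that for every sequence (V_m) with V_m in the convex hull of {R_k : k ≥ m} ∪ {−R_k : k ≥ m}, (V_m) converges to 0 in P-probability. Let B be the closed unit ball of ℓ¹, i.e., B = {(a_k) : Σ_k |a_k| ≤ 1}, equipped with the topology of coordinatewise convergence, and define T : B → L^0(P) by T((a_k)) = Σ_{k=1}^∞ a_k R_k (the series converging in L^1(P)). Then T is continuous from B to the space of random variables with the metric d(X,Y) = E_P[min(|X−Y|,1)] of convergence in P-probability, and the image T(B) is a compact subset of this metric space. -/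

import Mathlib

/-!
The hypothesis forces `sup {d(W, 0) : W ∈ conv {±R_k : k ≥ m}}` tends to `0` as `m → ∞`.
Every partial sum of `∑_{k ≥ m} c_k R_k` with `∑ |c_k| ≤ 1` lies in that hull, and the partial
sums converge in `L¹`, so the whole tail `∑_{k ≥ m} c_k R_k` is `d`-small uniformly in `c`.
Splitting `T a - T b` into its first `m` terms, which converge pointwise on `Ω` when `a → b`
coordinatewise, and two such tails gives continuity. Compactness of `T(B)` follows because `B`
is sequentially compact: it lies in the compact cube `[-1, 1]^ℕ` and is closed there.
-/

open MeasureTheory Filter Set ProbabilityTheory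

noncomputable section

namespace Paper

variable {Ω : Type*} [MeasurableSpace Ω]

/-- The metric `d(X,Y) = E_P[min(|X - Y|, 1)]` metrizing convergence in `P`-probability. -/
def probDist (P : Measure Ω) (X Y : Ω → ℝ) : ℝ :=
  ∫ ω, min |X ω - Y ω| 1 ∂P

/-- `Q` is a probability measure equivalent to `P` (mutually absolutely continuous). -/
def EquivProb (P Q : Measure Ω) : Prop :=
  IsProbabilityMeasure Q ∧ Q ≪ P ∧ P ≪ Q

/-- `K` is a set of `P`-integrable random variables bounded in `L¹(P)`. -/
def BddL1 (P : Measure Ω) (K : Set (Ω → ℝ)) : Prop :=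
  (∀ X ∈ K, Integrable X P) ∧ ∃ C : ℝ, ∀ X ∈ K, (∫ ω, |X ω| ∂P) ≤ C

/-- `K` is `Q`-uniformly integrable: all members are `Q`-integrable and
`sup_{X ∈ K} E_Q[|X| · 1_{|X| > c}] → 0` as `c → ∞`. -/
def UIset (Q : Measure Ω) (K : Set (Ω → ℝ)) : Prop :=
  (∀ X ∈ K, Integrable X Q) ∧
  ∀ ε : ℝ, 0 < ε → ∃ c : ℝ, ∀ X ∈ K, (∫ ω in {ω | c < |X ω|}, |X ω| ∂Q) < ε

/-- The sequence `Xs` is Cauchy in `P`-probability. -/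
def CauchyInProb (P : Measure Ω) (Xs : ℕ → Ω → ℝ) : Prop :=
  ∀ ε : ℝ, 0 < ε →
    Tendsto (fun p : ℕ × ℕ => P {ω | ε ≤ |Xs p.1 ω - Xs p.2 ω|}) atTop (nhds 0)

/-- The (sequential) closure of `K` in the topology of convergence in `P`-probability. -/
def probClosure (P : Measure Ω) (K : Set (Ω → ℝ)) : Set (Ω → ℝ) :=
  {X | ∃ Xs : ℕ → Ω → ℝ, (∀ n, Xs n ∈ K) ∧ TendstoInMeasure P Xs atTop X}

/-- A set `W` of random variables is solid: if `X ∈ W` and `|Y| ≤ |X|` a.s. then `Y ∈ W`. -/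
def SolidSet (P : Measure Ω) (W : Set (Ω → ℝ)) : Prop :=
  ∀ X ∈ W, ∀ Y : Ω → ℝ, AEStronglyMeasurable Y P →
    (∀ᵐ ω ∂P, |Y ω| ≤ |X ω|) → Y ∈ W

/-- The solid hull of a set `A` of random variables. -/
def solidHull (P : Measure Ω) (A : Set (Ω → ℝ)) : Set (Ω → ℝ) :=
  {Y | AEStronglyMeasurable Y P ∧ ∃ X ∈ A, ∀ᵐ ω ∂P, |Y ω| ≤ |X ω|}

/-- The relative `L⁰(P)`-topology on `K` is uniformly locally convex-solid on `S`:
for every `ε > 0` there is a convex solid set `W` of integrable random variables contained in the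
`ε`-ball around `0` such that, for each `X ∈ S`, `(X + W) ∩ K` contains a `d`-ball of `K`
around `X`. -/
def UnifLCS (P : Measure Ω) (K S : Set (Ω → ℝ)) : Prop :=
  ∀ ε : ℝ, 0 < ε → ∃ W : Set (Ω → ℝ),
    (∀ Z ∈ W, Integrable Z P) ∧ Convex ℝ W ∧ SolidSet P W ∧
    (∀ Z ∈ W, probDist P Z 0 < ε) ∧
    ∀ X ∈ S, ∃ δ : ℝ, 0 < δ ∧ ∀ Z ∈ K, probDist P Z X < δ → Z - X ∈ W

/-- The `L⁰(Q)`- and `L¹(Q)`-topologies agree on `K`: a sequence in `K` converges in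
`P`-probability to a member of `K` iff it converges in `L¹(Q)`-norm. -/
def TopAgree (P Q : Measure Ω) (K : Set (Ω → ℝ)) : Prop :=
  ∀ (Xs : ℕ → Ω → ℝ) (X : Ω → ℝ), (∀ n, Xs n ∈ K) → X ∈ K →
    (TendstoInMeasure P Xs atTop X ↔
      Tendsto (fun n => ∫⁻ ω, ENNReal.ofReal |Xs n ω - X ω| ∂Q) atTop (nhds 0))

/-- `W` is a forward convex combination of the sequence `Z`. -/
def IsFCC (Z : ℕ → Ω → ℝ) (W : ℕ → Ω → ℝ) : Prop :=
  ∀ k, W k ∈ convexHull ℝ (Z '' {n | k ≤ n})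

/-- The relative `L⁰(P)`-topology on `K` is locally convex at `X` (forward convex combination
formulation): every FCC of a sequence in `K` converging to `X` in probability also converges
to `X` in probability. -/
def LocConvexAt (P : Measure Ω) (K : Set (Ω → ℝ)) (X : Ω → ℝ) : Prop :=
  ∀ Xs : ℕ → Ω → ℝ, (∀ n, Xs n ∈ K) → TendstoInMeasure P Xs atTop X →
    ∀ W : ℕ → Ω → ℝ, IsFCC Xs W → TendstoInMeasure P W atTop X

/-- The set `L = {Σ_k a_k R_k : Σ_k |a_k| ≤ 1}` (with pointwise a.e. absolutely convergent
series, which also converge in `L¹(P)`). -/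
def Lset (R : ℕ → Ω → ℝ) : Set (Ω → ℝ) :=
  {G | ∃ a : ℕ → ℝ, Summable (fun k => |a k|) ∧ (∑' k, |a k|) ≤ 1 ∧
    G = fun ω => ∑' k, a k * R k ω}

/-- The standard Cauchy distribution on `ℝ`. -/
def cauchyLaw : Measure ℝ :=
  MeasureTheory.volume.withDensity (fun t => ENNReal.ofReal (1 / (Real.pi * (1 + t ^ 2))))

/-- Local convexity of the relative topology on `A ⊆ E` at a point `x ∈ A`, in a topological
vector space. -/
def LocConvexAtTVS {E : Type*} [AddCommGroup E] [Module ℝ E] [TopologicalSpace E]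
    (A : Set E) (x : E) : Prop :=
  ∀ V ∈ nhds (0 : E), ∃ U ∈ nhds (0 : E), ∃ C : Set E,
    Convex ℝ C ∧ ((fun u => x + u) '' U) ∩ A ⊆ C ∧ C ⊆ ((fun v => x + v) '' V) ∩ A

open scoped ENNReal Topology

lemma min_abs_sub_one_le_add (x y z : ℝ) : min |x - z| 1 ≤ min |x - y| 1 + min |y - z| 1 := by
  rcases le_total |x - y| 1 with h₁ | h₁ <;> rcases le_total |y - z| 1 with h₂ | h₂ <;>
    simp only [min_eq_left, min_eq_right, h₁, h₂] <;>
    linarith [abs_sub_le x y z, min_le_left |x - z| 1, min_le_right |x - z| 1, abs_nonneg (x - y),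
      abs_nonneg (y - z)]

section ProbDist

variable {P : Measure Ω}

lemma probDist_nonneg (X Y : Ω → ℝ) : 0 ≤ probDist P X Y :=
  integral_nonneg fun _ => by positivity

lemma probDist_comm (X Y : Ω → ℝ) : probDist P X Y = probDist P Y X := by
  simp only [probDist, abs_sub_comm]

variable [IsFiniteMeasure P]

lemma integrable_min_abs_one {f : Ω → ℝ} (hf : AEStronglyMeasurable f P) :
    Integrable (fun ω => min |f ω| 1) P :=
  (integrable_const 1).mono' ((continuous_abs.min continuous_const).comp_aestronglyMeasurable hf)
    (ae_of_all _ fun ω => by rw [Real.norm_of_nonneg (by positivity)]; exact min_le_right _ _)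

lemma probDist_triangle {X Y Z : Ω → ℝ} (hX : AEStronglyMeasurable X P)
    (hY : AEStronglyMeasurable Y P) (hZ : AEStronglyMeasurable Z P) :
    probDist P X Z ≤ probDist P X Y + probDist P Y Z := by
  have hXY : Integrable (fun ω => min |X ω - Y ω| 1) P := integrable_min_abs_one (hX.sub hY)
  have hYZ : Integrable (fun ω => min |Y ω - Z ω| 1) P := integrable_min_abs_one (hY.sub hZ)
  rw [probDist, probDist, probDist, ← integral_add hXY hYZ]
  exact integral_mono (integrable_min_abs_one (hX.sub hZ)) (hXY.add hYZ)
    fun ω => min_abs_sub_one_le_add _ _ _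

lemma probDist_le_integral_abs_sub {X Y : Ω → ℝ} (h : Integrable (X - Y) P) :
    probDist P X Y ≤ ∫ ω, |X ω - Y ω| ∂P :=
  integral_mono (integrable_min_abs_one h.1) h.abs fun _ => min_le_left _ _

/-- Dominated convergence along a.e. convergent subsequences. -/
lemma tendsto_probDist_of_tendstoInMeasure {V : ℕ → Ω → ℝ} {X : Ω → ℝ}
    (hV : ∀ n, AEStronglyMeasurable (V n) P) (h : TendstoInMeasure P V atTop X) :
    Tendsto (fun n => probDist P (V n) X) atTop (𝓝 0) := by
  have hX := h.aestronglyMeasurable hV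
  refine tendsto_of_subseq_tendsto fun ns hns => ?_
  obtain ⟨ms, -, hms⟩ := (h.comp hns).exists_seq_tendsto_ae
  refine ⟨ms, ?_⟩
  have hlim := tendsto_integral_of_dominated_convergence (fun _ => (1 : ℝ))
    (fun n => (integrable_min_abs_one ((hV (ns (ms n))).sub hX)).1) (integrable_const 1)
    (fun n => ae_of_all _ fun ω => by
      rw [Real.norm_of_nonneg (by positivity)]; exact min_le_right _ _)
    (hms.mono fun ω hω => by
      simpa using ((hω.sub_const (X ω)).abs.min tendsto_const_nhds))
  simpa [probDist] using hlim

end ProbDist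

section SeriesOfIntegrable

variable {μ : Measure Ω} {E : Type*} [NormedAddCommGroup E] {f : ℕ → Ω → E}

lemma tsum_lintegral_enorm_ne_top (hf : ∀ i, Integrable (f i) μ)
    (hs : Summable fun i => ∫ ω, ‖f i ω‖ ∂μ) : ∑' i, ∫⁻ ω, ‖f i ω‖ₑ ∂μ ≠ ∞ := by
  simp_rw [← ofReal_integral_norm_eq_lintegral_enorm (hf _)]
  rw [← ENNReal.ofReal_tsum_of_nonneg (fun i => integral_nonneg fun _ => norm_nonneg _) hs]
  exact ENNReal.ofReal_ne_top

lemma ae_summable_norm_of_summable_integral_norm (hf : ∀ i, Integrable (f i) μ)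
    (hs : Summable fun i => ∫ ω, ‖f i ω‖ ∂μ) : ∀ᵐ ω ∂μ, Summable fun i => ‖f i ω‖ :=
  summable_norm_of_tsum_eLpNorm_ne_top le_rfl (fun i => (hf i).1)
    (by simpa only [eLpNorm_one_eq_lintegral_enorm] using tsum_lintegral_enorm_ne_top hf hs)

lemma integrable_tsum_of_summable_integral_norm [CompleteSpace E] (hf : ∀ i, Integrable (f i) μ)
    (hs : Summable fun i => ∫ ω, ‖f i ω‖ ∂μ) : Integrable (fun ω => ∑' i, f i ω) μ := by
  refine ⟨aestronglyMeasurable_of_tendsto_ae atTop (f := fun n ω => ∑ i ∈ Finset.range n, f i ω)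
    (fun n => Finset.aestronglyMeasurable_fun_sum _ fun i _ => (hf i).1) ?_, ?_⟩
  · filter_upwards [ae_summable_norm_of_summable_integral_norm hf hs] with ω hω
    exact hω.of_norm.hasSum.tendsto_sum_nat
  · calc ∫⁻ ω, ‖∑' i, f i ω‖ₑ ∂μ ≤ ∫⁻ ω, ∑' i, ‖f i ω‖ₑ ∂μ :=
          lintegral_mono fun _ => enorm_tsum_le_tsum_enorm
      _ = ∑' i, ∫⁻ ω, ‖f i ω‖ₑ ∂μ := lintegral_tsum fun i => (hf i).1.enorm
      _ < ∞ := (tsum_lintegral_enorm_ne_top hf hs).lt_top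

lemma integral_norm_tsum_le [CompleteSpace E] (hf : ∀ i, Integrable (f i) μ)
    (hs : Summable fun i => ∫ ω, ‖f i ω‖ ∂μ) :
    ∫ ω, ‖∑' i, f i ω‖ ∂μ ≤ ∑' i, ∫ ω, ‖f i ω‖ ∂μ := by
  have hf' : ∀ i, Integrable (fun ω => ‖f i ω‖) μ := fun i => (hf i).norm
  have hs' : Summable fun i => ∫ ω, ‖‖f i ω‖‖ ∂μ := by simpa only [norm_norm] using hs
  calc ∫ ω, ‖∑' i, f i ω‖ ∂μ ≤ ∫ ω, ∑' i, ‖f i ω‖ ∂μ :=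
        integral_mono_of_nonneg (ae_of_all _ fun _ => norm_nonneg _)
          (integrable_tsum_of_summable_integral_norm hf' hs')
          ((ae_summable_norm_of_summable_integral_norm hf hs).mono
            fun _ hω => norm_tsum_le_tsum_norm hω)
    _ = ∑' i, ∫ ω, ‖f i ω‖ ∂μ := (hasSum_integral_of_summable_integral_norm hf' hs').tsum_eq.symm

end SeriesOfIntegrable

section WeightedSeries

variable {P : Measure Ω} {R : ℕ → Ω → ℝ} {C : ℝ} {a : ℕ → ℝ}

lemma integral_norm_mul_le (hC : ∀ l, ∫ ω, |R l ω| ∂P ≤ C) (l : ℕ) :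
    ∫ ω, ‖a l * R l ω‖ ∂P ≤ |a l| * C := by
  simp only [norm_mul, Real.norm_eq_abs, integral_const_mul]
  exact mul_le_mul_of_nonneg_left (hC l) (abs_nonneg _)

lemma summable_integral_norm_mul (hC : ∀ l, ∫ ω, |R l ω| ∂P ≤ C)
    (ha : Summable fun l => |a l|) : Summable fun l => ∫ ω, ‖a l * R l ω‖ ∂P :=
  (ha.mul_right C).of_nonneg_of_le (fun _ => integral_nonneg fun _ => norm_nonneg _)
    (integral_norm_mul_le hC)

lemma ae_summable_mul (hR : ∀ l, Integrable (R l) P) (hC : ∀ l, ∫ ω, |R l ω| ∂P ≤ C)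
    (ha : Summable fun l => |a l|) : ∀ᵐ ω ∂P, Summable fun l => a l * R l ω :=
  (ae_summable_norm_of_summable_integral_norm (fun l => (hR l).const_mul (a l))
    (summable_integral_norm_mul hC ha)).mono fun _ hω => hω.of_norm

lemma integrable_tsum_mul (hR : ∀ l, Integrable (R l) P) (hC : ∀ l, ∫ ω, |R l ω| ∂P ≤ C)
    (ha : Summable fun l => |a l|) : Integrable (fun ω => ∑' l, a l * R l ω) P :=
  integrable_tsum_of_summable_integral_norm (fun l => (hR l).const_mul (a l))
    (summable_integral_norm_mul hC ha)

lemma probDist_tsum_mul_zero_le [IsFiniteMeasure P] (hR : ∀ l, Integrable (R l) P)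
    (hC : ∀ l, ∫ ω, |R l ω| ∂P ≤ C) (ha : Summable fun l => |a l|) :
    probDist P (fun ω => ∑' l, a l * R l ω) 0 ≤ C * ∑' l, |a l| := by
  calc probDist P (fun ω => ∑' l, a l * R l ω) 0 ≤ ∫ ω, |∑' l, a l * R l ω| ∂P := by
        simpa using probDist_le_integral_abs_sub (P := P) (Y := 0)
          (by simpa using integrable_tsum_mul hR hC ha)
    _ ≤ ∑' l, ∫ ω, ‖a l * R l ω‖ ∂P :=
        integral_norm_tsum_le (fun l => (hR l).const_mul (a l)) (summable_integral_norm_mul hC ha)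
    _ ≤ ∑' l, |a l| * C :=
        (summable_integral_norm_mul hC ha).tsum_le_tsum (integral_norm_mul_le hC) (ha.mul_right C)
    _ = C * ∑' l, |a l| := by rw [tsum_mul_right, mul_comm]

lemma probDist_tsum_mul_sum_range (hR : ∀ l, Integrable (R l) P)
    (hC : ∀ l, ∫ ω, |R l ω| ∂P ≤ C) (ha : Summable fun l => |a l|) (N : ℕ) :
    probDist P (fun ω => ∑' l, a l * R l ω) (fun ω => ∑ l ∈ Finset.range N, a l * R l ω) =
      probDist P (fun ω => ∑' l, a (l + N) * R (l + N) ω) 0 := by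
  refine integral_congr_ae ((ae_summable_mul hR hC ha).mono fun ω hω => ?_)
  simp only [← hω.sum_add_tsum_nat_add N, add_sub_cancel_left, Pi.zero_apply, sub_zero]

end WeightedSeries

section Hull

variable {E : Type*} [AddCommGroup E] [Module ℝ E]

def tailHull (R : ℕ → E) (m : ℕ) : Set E :=
  convexHull ℝ ((R '' {j | m ≤ j}) ∪ ((fun j => -R j) '' {j | m ≤ j}))

lemma tailHull_eq_absConvexHull (R : ℕ → E) (m : ℕ) :
    tailHull R m = absConvexHull ℝ (R '' {j | m ≤ j}) := by
  rw [tailHull, ← convexHull_union_neg_eq_absConvexHull, ← Set.image_neg_eq_neg, Set.image_image]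

lemma sum_smul_mem_absConvexHull {s : Set E} (hs : s.Nonempty) {ι : Type*} {t : Finset ι}
    {c : ι → ℝ} {v : ι → E} (hc : ∑ i ∈ t, |c i| ≤ 1) (hv : ∀ i ∈ t, v i ∈ s) :
    ∑ i ∈ t, c i • v i ∈ absConvexHull ℝ s := by
  have hz : ∀ i ∈ t, (SignType.sign (c i) : ℝ) • v i ∈ absConvexHull ℝ s := fun i hi =>
    balanced_absConvexHull.smul_mem (by rcases lt_trichotomy (c i) 0 with h | h | h <;> simp [h])
      (subset_absConvexHull (hv i hi))
  have hsum : ∑ i ∈ t, c i • v i = ∑ i ∈ t, |c i| • (SignType.sign (c i) : ℝ) • v i :=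
    Finset.sum_congr rfl fun i _ => by rw [smul_smul, abs_mul_sign]
  rcases (Finset.sum_nonneg fun i _ => abs_nonneg (c i)).eq_or_lt with h0 | hpos
  · have hc0 : ∀ i ∈ t, c i = 0 := fun i hi =>
      abs_eq_zero.1 ((Finset.sum_eq_zero_iff_of_nonneg fun i _ => abs_nonneg _).1 h0.symm i hi)
    rw [Finset.sum_eq_zero fun i hi => by rw [hc0 i hi, zero_smul]]
    exact balanced_absConvexHull.zero_mem (absConvexHull_nonempty.2 hs)
  · -- a subconvex combination is a shrunk center of mass
    rw [hsum, ← smul_inv_smul₀ hpos.ne' (∑ i ∈ t, _)]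
    refine balanced_absConvexHull.smul_mem (by rwa [Real.norm_of_nonneg hpos.le])
      (convex_absConvexHull.centerMass_mem (fun i _ => abs_nonneg _) hpos hz)

end Hull

lemma aestronglyMeasurable_of_mem_convexHull {μ : Measure Ω} {E : Type*} [NormedAddCommGroup E]
    [NormedSpace ℝ E] {s : Set (Ω → E)} (hs : ∀ f ∈ s, AEStronglyMeasurable f μ) {f : Ω → E}
    (hf : f ∈ convexHull ℝ s) : AEStronglyMeasurable f μ :=
  convexHull_min (t := {f | AEStronglyMeasurable f μ}) hs
    (fun _ hf _ hg a b _ _ _ =>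
      show AEStronglyMeasurable _ μ from (hf.const_smul a).add (hg.const_smul b)) hf

lemma tsum_nat_add_le_tsum {f : ℕ → ℝ} (hf : Summable f) (h0 : ∀ n, 0 ≤ f n) (k : ℕ) :
    ∑' n, f (n + k) ≤ ∑' n, f n := by
  rw [← hf.sum_add_tsum_nat_add k]
  exact le_add_of_nonneg_left (Finset.sum_nonneg fun n _ => h0 n)

section TailHull

variable {P : Measure Ω} [IsFiniteMeasure P] {R : ℕ → Ω → ℝ}

lemma exists_tailHull_probDist_le (hR : ∀ j, AEStronglyMeasurable (R j) P)
    (hfcc : ∀ V : ℕ → Ω → ℝ, (∀ m, V m ∈ tailHull R m) → TendstoInMeasure P V atTop 0)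
    {ε : ℝ} (hε : 0 < ε) : ∃ m, ∀ W ∈ tailHull R m, probDist P W 0 ≤ ε := by
  by_contra! h
  choose V hV hεV using h
  have hmeas : ∀ m, AEStronglyMeasurable (V m) P := fun m =>
    aestronglyMeasurable_of_mem_convexHull
      (by rintro _ (⟨j, -, rfl⟩ | ⟨j, -, rfl⟩) <;> [exact hR j; exact (hR j).neg]) (hV m)
  obtain ⟨m, hm⟩ :=
    ((tendsto_probDist_of_tendstoInMeasure hmeas (hfcc V hV)).eventually (gt_mem_nhds hε)).exists
  exact (hεV m).not_gt hm

/-- The partial sums of `∑ c l R (l + m)` lie in `tailHull R m`, and they converge in `L¹`. -/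
lemma probDist_tsum_le_of_tailHull (hR : ∀ l, Integrable (R l) P) {C : ℝ}
    (hC : ∀ l, ∫ ω, |R l ω| ∂P ≤ C) {m : ℕ} {ε : ℝ}
    (hm : ∀ W ∈ tailHull R m, probDist P W 0 ≤ ε) {c : ℕ → ℝ} (hc : Summable fun l => |c l|)
    (hc1 : ∑' l, |c l| ≤ 1) : probDist P (fun ω => ∑' l, c l * R (l + m) ω) 0 ≤ ε := by
  set S : ℕ → Ω → ℝ := fun N ω => ∑ l ∈ Finset.range N, c l * R (l + m) ω
  have hS : ∀ N, probDist P (S N) 0 ≤ ε := by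
    intro N
    refine hm _ ?_
    have hSN : S N = ∑ l ∈ Finset.range N, c l • R (l + m) := by
      ext ω; simp [S, Finset.sum_apply]
    rw [hSN, tailHull_eq_absConvexHull]
    exact sum_smul_mem_absConvexHull (s := R '' {j | m ≤ j}) ⟨R m, m, le_refl m, rfl⟩
      ((hc.sum_le_tsum _ fun l _ => abs_nonneg _).trans hc1)
      fun l _ => ⟨l + m, Nat.le_add_left m l, rfl⟩
  have hR' : ∀ l, Integrable (R (l + m)) P := fun l => hR (l + m)
  have hC' : ∀ l, ∫ ω, |R (l + m) ω| ∂P ≤ C := fun l => hC (l + m)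
  have hbound : ∀ N, probDist P (fun ω => ∑' l, c l * R (l + m) ω) 0 ≤
      C * ∑' l, |c (l + N)| + ε := by
    intro N
    calc _ ≤ probDist P (fun ω => ∑' l, c l * R (l + m) ω) (S N) + probDist P (S N) 0 :=
          probDist_triangle (integrable_tsum_mul hR' hC' hc).1
            (Finset.aestronglyMeasurable_fun_sum _ fun l _ => ((hR' l).const_mul _).1)
            aestronglyMeasurable_const
      _ ≤ C * ∑' l, |c (l + N)| + ε := by
          rw [probDist_tsum_mul_sum_range hR' hC' hc N]
          exact add_le_add (probDist_tsum_mul_zero_le (fun l => hR' (l + N))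
            (fun l => hC' (l + N)) ((summable_nat_add_iff N).2 hc)) (hS N)
  refine ge_of_tendsto' (x := atTop) ?_ hbound
  simpa using ((tendsto_sum_nat_add fun l => |c l|).const_mul C).add_const ε

end TailHull

section Continuity

variable {P : Measure Ω} [IsFiniteMeasure P] {R : ℕ → Ω → ℝ}

lemma tendsto_probDist_tsum_mul (hR : ∀ l, Integrable (R l) P) {C : ℝ}
    (hC : ∀ l, ∫ ω, |R l ω| ∂P ≤ C)
    (hhull : ∀ ε > 0, ∃ m, ∀ W ∈ tailHull R m, probDist P W 0 ≤ ε)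
    {a : ℕ → ℕ → ℝ} {b : ℕ → ℝ}
    (ha : ∀ j, Summable (fun l => |a j l|) ∧ ∑' l, |a j l| ≤ 1)
    (hb : Summable (fun l => |b l|) ∧ ∑' l, |b l| ≤ 1)
    (hab : ∀ l, Tendsto (fun j => a j l) atTop (𝓝 (b l))) :
    Tendsto (fun j => probDist P (fun ω => ∑' l, a j l * R l ω) (fun ω => ∑' l, b l * R l ω))
      atTop (𝓝 0) := by
  refine tendsto_order.2 ⟨fun e he => Eventually.of_forall fun j =>
    he.trans_le (probDist_nonneg _ _), fun ε hε => ?_⟩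
  obtain ⟨m, hm⟩ := hhull (ε / 4) (by positivity)
  set H : (ℕ → ℝ) → Ω → ℝ := fun c ω => ∑ l ∈ Finset.range m, c l * R l ω
  have hHmeas : ∀ c, AEStronglyMeasurable (H c) P := fun c =>
    Finset.aestronglyMeasurable_fun_sum _ fun l _ => ((hR l).const_mul _).1
  have htail : ∀ c : ℕ → ℝ, Summable (fun l => |c l|) → ∑' l, |c l| ≤ 1 →
      probDist P (fun ω => ∑' l, c l * R l ω) (H c) ≤ ε / 4 := fun c hc hc1 => by
    rw [probDist_tsum_mul_sum_range hR hC hc]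
    exact probDist_tsum_le_of_tailHull hR hC hm ((summable_nat_add_iff m).2 hc)
      ((tsum_nat_add_le_tsum hc (fun l => abs_nonneg _) m).trans hc1)
  -- on the first `m` coordinates, convergence is pointwise on `Ω`
  have hhead : Tendsto (fun j => probDist P (H (a j)) (H b)) atTop (𝓝 0) :=
    tendsto_probDist_of_tendstoInMeasure (fun j => hHmeas _)
      (tendstoInMeasure_of_tendsto_ae (fun j => hHmeas _)
        (ae_of_all _ fun ω => tendsto_finsetSum _ fun l _ => (hab l).mul_const _))
  filter_upwards [hhead.eventually (gt_mem_nhds (half_pos hε))] with j hj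
  have hT : ∀ c : ℕ → ℝ, Summable (fun l => |c l|) →
      AEStronglyMeasurable (fun ω => ∑' l, c l * R l ω) P := fun c hc =>
    (integrable_tsum_mul hR hC hc).1
  calc _ ≤ probDist P (fun ω => ∑' l, a j l * R l ω) (H (a j))
        + probDist P (H (a j)) (fun ω => ∑' l, b l * R l ω) :=
        probDist_triangle (hT _ (ha j).1) (hHmeas _) (hT _ hb.1)
    _ ≤ probDist P (fun ω => ∑' l, a j l * R l ω) (H (a j))
        + (probDist P (H (a j)) (H b) + probDist P (H b) (fun ω => ∑' l, b l * R l ω)) :=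
        add_le_add le_rfl (probDist_triangle (hHmeas _) (hHmeas _) (hT _ hb.1))
    _ < ε := by
        rw [probDist_comm (H b)]
        linarith [htail _ (ha j).1 (ha j).2, htail _ hb.1 hb.2]

end Continuity

section UnitBall

lemma summable_abs_and_tsum_le_of_tendsto {ι : Type*} {L : Filter ι} [L.NeBot] {a : ι → ℕ → ℝ}
    {b : ℕ → ℝ} {r : ℝ} (ha : ∀ j, Summable (fun l => |a j l|) ∧ ∑' l, |a j l| ≤ r)
    (hab : ∀ l, Tendsto (fun j => a j l) L (𝓝 (b l))) :
    Summable (fun l => |b l|) ∧ ∑' l, |b l| ≤ r := by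
  have hpartial : ∀ n, ∑ l ∈ Finset.range n, |b l| ≤ r := fun n =>
    le_of_tendsto' (tendsto_finsetSum _ fun l _ => (hab l).abs) fun j =>
      ((ha j).1.sum_le_tsum _ fun l _ => abs_nonneg _).trans (ha j).2
  have hsum := summable_of_sum_range_le (fun l => abs_nonneg (b l)) hpartial
  exact ⟨hsum, hsum.tsum_le_of_sum_range_le hpartial⟩

lemma exists_subseq_tendsto_of_tsum_abs_le_one {a : ℕ → ℕ → ℝ}
    (ha : ∀ j, Summable (fun l => |a j l|) ∧ ∑' l, |a j l| ≤ 1) :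
    ∃ b : ℕ → ℝ, (Summable (fun l => |b l|) ∧ ∑' l, |b l| ≤ 1) ∧
      ∃ φ : ℕ → ℕ, StrictMono φ ∧ ∀ l, Tendsto (fun j => a (φ j) l) atTop (𝓝 (b l)) := by
  have hcube : ∀ j, a j ∈ Set.univ.pi fun _ => Set.Icc (-1 : ℝ) 1 := fun j l _ =>
    abs_le.1 (((ha j).1.le_tsum l fun l' _ => abs_nonneg _).trans (ha j).2)
  obtain ⟨b, -, φ, hφ, hlim⟩ := (isCompact_univ_pi fun _ => isCompact_Icc).tendsto_subseq hcube
  have hcoord : ∀ l, Tendsto (fun j => a (φ j) l) atTop (𝓝 (b l)) := tendsto_pi_nhds.1 hlim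
  exact ⟨b, summable_abs_and_tsum_le_of_tendsto (fun j => ha (φ j)) hcoord, φ, hφ, hcoord⟩

end UnitBall

/-- Proposition 4.9: the map `T((a_k)) = Σ_k a_k R_k` is (sequentially) continuous from the closed
unit ball of `ℓ¹` with coordinatewise convergence into `L⁰(P)` with the metric of convergence
in probability, and its image `L = T(B)` is (sequentially) compact for that metric. -/
theorem statement16 (P : Measure Ω) [IsProbabilityMeasure P]
    (R : ℕ → Ω → ℝ) (hint : ∀ j, Integrable (R j) P)
    (hbdd : ∃ C : ℝ, ∀ j, (∫ ω, |R j ω| ∂P) ≤ C)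
    (hfcc : ∀ V : ℕ → Ω → ℝ,
      (∀ m, V m ∈ convexHull ℝ ((R '' {j | m ≤ j}) ∪ ((fun j => -R j) '' {j | m ≤ j}))) →
      TendstoInMeasure P V atTop (fun _ => (0 : ℝ))) :
    (∀ (a : ℕ → ℕ → ℝ) (b : ℕ → ℝ),
      (∀ j, Summable (fun l => |a j l|) ∧ (∑' l, |a j l|) ≤ 1) →
      (Summable (fun l => |b l|) ∧ (∑' l, |b l|) ≤ 1) →
      (∀ l, Tendsto (fun j => a j l) atTop (nhds (b l))) →
      Tendsto (fun j => probDist P (fun ω => ∑' l, a j l * R l ω)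
        (fun ω => ∑' l, b l * R l ω)) atTop (nhds 0)) ∧
    (∀ G : ℕ → Ω → ℝ, (∀ j, G j ∈ Lset R) →
      ∃ φ : ℕ → ℕ, StrictMono φ ∧ ∃ G₀ ∈ Lset R,
        Tendsto (fun j => probDist P (G (φ j)) G₀) atTop (nhds 0)) := by
  obtain ⟨C, hC⟩ := hbdd
  have hhull : ∀ ε > 0, ∃ m, ∀ W ∈ tailHull R m, probDist P W 0 ≤ ε := fun ε hε =>
    exists_tailHull_probDist_le (fun j => (hint j).1) hfcc hε
  refine ⟨fun a b ha hb hab => tendsto_probDist_tsum_mul hint hC hhull ha hb hab, fun G hG => ?_⟩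
  choose a ha hGa using hG
  obtain ⟨b, hb, φ, hφ, hab⟩ :=
    exists_subseq_tendsto_of_tsum_abs_le_one (a := a) fun j => ⟨ha j, (hGa j).1⟩
  refine ⟨φ, hφ, _, ⟨b, hb.1, hb.2, rfl⟩, ?_⟩
  simpa only [(hGa _).2] using
    tendsto_probDist_tsum_mul hint hC hhull (fun j => ⟨ha (φ j), (hGa (φ j)).1⟩) hb hab

end Paper
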